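/- In the graph X_{k,t} (for k ≥ 3 and even t ≥ 4, constructed by inserting copies of K_{k+1} − e into each edge of the multigraph Y_{k,t}), for each odd i and each j ∈ {1,2}, the pair {e_i^j, e_{i+1}^j} is a vertex cut of the line graph L(X_{k,t}); consequently, in any Hamilton decomposition of L(X_{k,t}), each Hamilton cycle contains exactly one of the k-1 edges of L(X_{k,t}) joining e_i^j to the k-1 edges of the inserted copy X_i^j adjacent to e_i^j. -/

import Mathlib

open SimpleGraph
open scoped Classical

universe u v'

variable {V : Type*}

/-- `G` is regular of degree `k`. -/
def RegularDeg (G : SimpleGraph V) (k : ℕ) : Prop :=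
  ∀ v, Nat.card (G.neighborSet v) = k

/-- A family of `n` pairwise edge-disjoint Hamilton cycles in `G`. -/
def IsHamDecompFam (G : SimpleGraph V) {n : ℕ} (x : Fin n → V)
    (c : ∀ i, G.Walk (x i) (x i)) : Prop :=
  (∀ i, (c i).IsHamiltonianCycle) ∧
    ∀ i j, i ≠ j → ∀ e, e ∈ (c i).edges → e ∉ (c j).edges

/-- `G` contains `n` pairwise edge-disjoint Hamilton cycles. -/
def EdgeDisjointHamCycles (G : SimpleGraph V) (n : ℕ) : Prop :=
  ∃ (x : Fin n → V) (c : ∀ i, G.Walk (x i) (x i)), IsHamDecompFam G x c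

/-- A graph regular of degree `2k` or `2k+1` is Hamilton decomposable if it contains a set of
`k` pairwise edge-disjoint Hamilton cycles. -/
def HamiltonDecomposable (G : SimpleGraph V) : Prop :=
  ∃ k : ℕ, (RegularDeg G (2 * k) ∨ RegularDeg G (2 * k + 1)) ∧ EdgeDisjointHamCycles G k

/-- A multigraph: a vertex type, an edge type, and an assignment of (unordered) endpoints. -/
structure Multigraph : Type (max (u + 1) (v' + 1)) where
  V : Type u
  E : Type v'
  ends : E → Sym2 V

namespace Multigraph

variable (M : Multigraph)

/-- `M` has no loops. -/
def Loopless : Prop := ∀ e, ¬ (M.ends e).IsDiag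

/-- The degree of a vertex of a (loopless) multigraph: number of incident edges. -/
noncomputable def deg (v : M.V) : ℕ := Nat.card {e : M.E // v ∈ M.ends e}

/-- `M` is `k`-regular. -/
def Regular (k : ℕ) : Prop := ∀ v, M.deg v = k

/-- The underlying simple graph of `M`: adjacency given by existence of a connecting edge. -/
def toSG : SimpleGraph M.V where
  Adj x y := x ≠ y ∧ ∃ e, M.ends e = s(x, y)
  symm := ⟨by
    rintro x y ⟨hxy, e, he⟩
    exact ⟨hxy.symm, e, he.trans (Sym2.eq_swap)⟩⟩
  loopless := ⟨fun x h => h.1 rfl⟩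

/-- `M` is connected. -/
def Connected : Prop := M.toSG.Connected

/-- The line graph of a multigraph: vertices are edges, adjacency is sharing an endpoint. -/
def lineSG : SimpleGraph M.E where
  Adj e f := e ≠ f ∧ ∃ w, w ∈ M.ends e ∧ w ∈ M.ends f
  symm := ⟨by rintro e f ⟨hef, w, h1, h2⟩; exact ⟨hef.symm, w, h2, h1⟩⟩
  loopless := ⟨fun e h => h.1 rfl⟩

/-- A transition at a vertex `u`: a pair of (distinct) half-edges incident with `u`
(in a loopless multigraph, a pair of distinct edges incident with `u`). -/
structure Transition (M : Multigraph) where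
  u : M.V
  e₁ : M.E
  e₂ : M.E
  ne : e₁ ≠ e₂
  mem₁ : u ∈ M.ends e₁
  mem₂ : u ∈ M.ends e₂

/-- Endpoints of edges after splitting the vertex `t.u` into two vertices: the new vertex
`Sum.inr ()` receives the two half-edges of the transition `t`, and `Sum.inl t.u` keeps the
remaining half-edges at `t.u`. -/
noncomputable def splitEnds (t : M.Transition) (e : M.E) : Sym2 (M.V ⊕ Unit) :=
  if e = t.e₁ ∨ e = t.e₂ then
    Sym2.map (fun w => if w = t.u then Sum.inr () else Sum.inl w) (M.ends e)
  else Sym2.map Sum.inl (M.ends e)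

/-- The multigraph `M^t` obtained by splitting at the transition `t`. -/
noncomputable def split (t : M.Transition) : Multigraph where
  V := M.V ⊕ Unit
  E := M.E
  ends := M.splitEnds t

/-- A transition is separating if splitting at it increases the number of
connected components. -/
def IsSeparating (t : M.Transition) : Prop :=
  Nat.card (M.split t).toSG.ConnectedComponent > Nat.card M.toSG.ConnectedComponent

end Multigraph

/-- The multigraph underlying a simple graph. -/
def SimpleGraph.toMulti (G : SimpleGraph V) : Multigraph := ⟨V, G.edgeSet, Subtype.val⟩

/-- `G` has no separating transitions. -/
def NoSeparatingTransition (G : SimpleGraph V) : Prop :=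
  ∀ t : Multigraph.Transition G.toMulti, ¬ G.toMulti.IsSeparating t

/-- The multiplicity of the bundle of parallel edges of `Y_{k,t}` joining `vᵢ` to `vᵢ₊₁`
(`0`-indexed: `2` parallel edges when `i` is even, `k - 2` when `i` is odd). -/
def mult (k : ℕ) {t : ℕ} (i : Fin t) : ℕ := if (i : ℕ) % 2 = 0 then 2 else k - 2

/-- Vertices of `X_{k,t}`: the vertices `v₁, …, v_t` of `Y_{k,t}`, together with, for each
edge of `Y_{k,t}`, the `k+1` vertices of the copy of `K_{k+1} - e` inserted into it. -/
def XktVert (k t : ℕ) : Type :=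
  Fin t ⊕ ((Σ i : Fin t, Fin (mult k i)) × Fin (k + 1))

/-- The graph `X_{k,t}` obtained from `Y_{k,t}` by inserting a copy of `K_{k+1} - e` into each
edge.  The copy inserted into the `j`-th parallel edge joining `vᵢ` to `vᵢ₊₁` is a complete
graph on the `k+1` vertices `(⟨i, j⟩, a)`, `a : Fin (k+1)`, minus the edge joining
`(⟨i, j⟩, 0)` to `(⟨i, j⟩, 1)`; the vertex `(⟨i, j⟩, 0)` is joined to `vᵢ` and the vertex
`(⟨i, j⟩, 1)` is joined to `vᵢ₊₁`. -/
def Xkt (k t : ℕ) : SimpleGraph (XktVert k t) :=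
  SimpleGraph.fromRel (fun x y =>
    match x, y with
    | Sum.inl i, Sum.inr (⟨i', _⟩, a) =>
        (i' = i ∧ a = 0) ∨ ((i : ℕ) = ((i' : ℕ) + 1) % t ∧ a = 1)
    | Sum.inr (g, a), Sum.inr (g', b) => g = g' ∧ s(a, b) ≠ s((0 : Fin (k + 1)), 1)
    | _, _ => False)

/-- A vertex cut of a connected graph: a set of vertices whose removal disconnects it. -/
def IsVertexCut {W : Type*} (G : SimpleGraph W) (S : Set W) : Prop :=
  G.Connected ∧ ¬ (G.induce Sᶜ).Connected

/-!
Inside `L(X_{k,t})`, the edges of the inserted copy `X_i^j` can be left only through `e_i^j`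
and `e_{i+1}^j`, and there are edges on both sides, so these two vertices separate the line
graph. They are not adjacent, so a Hamilton cycle splits into two arcs between them; each arc
stays on one side of the cut, and since both sides are visited, exactly one arc leaves `e_i^j`
into `X_i^j`. Its first edge is the unique cycle edge from `e_i^j` into `X_i^j`.
-/

lemma Fin.val_one_of_pos {k : ℕ} (hk : 0 < k) : ((1 : Fin (k + 1)) : ℕ) = 1 :=
  (Fin.val_one' _).trans (Nat.mod_eq_of_lt (by omega))

lemma Fin.ne_of_val_eq_add_one_mod {t : ℕ} (ht : 2 ≤ t) {i i₁ : Fin t}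
    (h : (i₁ : ℕ) = ((i : ℕ) + 1) % t) : i₁ ≠ i := by
  rintro rfl
  rcases Nat.lt_or_ge ((i₁ : ℕ) + 1) t with hlt | hge
  · rw [Nat.mod_eq_of_lt hlt] at h
    omega
  · rw [show (i₁ : ℕ) + 1 = t by omega, Nat.mod_self] at h
    omega

namespace SimpleGraph

variable {G : SimpleGraph V}

lemma lineGraph_reachable_of_mem_of_mem {v : V} {e f : G.edgeSet} (he : v ∈ (e : Sym2 V))
    (hf : v ∈ (f : Sym2 V)) : G.lineGraph.Reachable e f := by
  by_cases hef : e = f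
  · exact hef ▸ .refl e
  · exact (lineGraph_adj_iff_exists.2 ⟨hef, v, he, hf⟩).reachable

lemma Walk.lineGraph_reachable {u v : V} (p : G.Walk u v) {e f : G.edgeSet}
    (hu : u ∈ (e : Sym2 V)) (hv : v ∈ (f : Sym2 V)) : G.lineGraph.Reachable e f := by
  induction p generalizing e with
  | nil => exact lineGraph_reachable_of_mem_of_mem hu hv
  | cons huw _ ih =>
    exact (lineGraph_reachable_of_mem_of_mem (f := ⟨_, huw⟩) hu (Sym2.mem_mk_left _ _)).trans
      (ih (Sym2.mem_mk_right _ _) hv)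

theorem Connected.lineGraph (hG : G.Connected) (e : G.edgeSet) : G.lineGraph.Connected := by
  refine @Connected.mk _ _ (fun e f => ?_) ⟨e⟩
  obtain ⟨u, hu⟩ : ∃ u, u ∈ (e : Sym2 V) := ⟨_, Sym2.out_fst_mem _⟩
  obtain ⟨v, hv⟩ : ∃ v, v ∈ (f : Sym2 V) := ⟨_, Sym2.out_fst_mem _⟩
  exact (hG u v).some.lineGraph_reachable hu hv

def IsSeparatedBy (G : SimpleGraph V) (P : Set V) (A B : V) : Prop :=
  ∀ ⦃f g⦄, G.Adj f g → f ∈ P → g ∈ P ∨ g = A ∨ g = B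

namespace IsSeparatedBy

variable {P : Set V} {A B : V}

lemma compl (hP : G.IsSeparatedBy P A B) :
    G.IsSeparatedBy {z | z ∉ P ∧ z ≠ A ∧ z ≠ B} A B := by
  rintro f g hfg ⟨hfP, hfA, hfB⟩
  by_cases hg : g ∈ P
  · rcases hP hfg.symm hg with h | h | h <;> contradiction
  · by_cases hgA : g = A
    · exact .inr (.inl hgA)
    by_cases hgB : g = B
    · exact .inr (.inr hgB)
    exact .inl ⟨hg, hgA, hgB⟩

lemma mem_of_walk (hP : G.IsSeparatedBy P A B) {u v : V} (p : G.Walk u v) (hu : u ∈ P)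
    (hA : A ∉ p.support) (hB : B ∉ p.support) : v ∈ P := by
  induction p with
  | nil => exact hu
  | cons huw p ih =>
    simp only [Walk.support_cons, List.mem_cons, not_or] at hA hB
    rcases hP huw hu with h | rfl | rfl
    · exact ih h hA.2 hB.2
    · exact absurd p.start_mem_support hA.2
    · exact absurd p.start_mem_support hB.2

lemma mem_or_eq_of_isPath (hP : G.IsSeparatedBy P A B) {u : V} {p : G.Walk u B}
    (hp : p.IsPath) (hu : u ∈ P) (hA : A ∉ p.support) :
    ∀ z ∈ p.support, z ∈ P ∨ z = B := by
  induction p with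
  | nil => simp [hu]
  | cons huw p ih =>
    rw [Walk.cons_isPath_iff] at hp
    simp only [Walk.support_cons, List.mem_cons, not_or] at hA ⊢
    rintro z (rfl | hz)
    · exact .inl hu
    rcases hP huw hu with h | rfl | rfl
    · exact ih hP hp.1 h hA.2 z hz
    · exact absurd p.start_mem_support hA.2
    · rw [(Walk.isPath_iff_nil.1 hp.1).eq_nil] at hz
      exact .inr (List.mem_singleton.1 hz)

lemma mem_of_mem_support_of_isPath (hP : G.IsSeparatedBy P A B) {x y : V} {r : G.Walk x y}
    (hr : r.IsPath) (hA : A ∉ r.support) (hB : B ∈ r.support) (hx : x ∈ P) (hy : y ∈ P)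
    {z : V} (hz : z ∈ r.support) (hzB : z ≠ B) : z ∈ P := by
  rw [← r.take_spec hB, Walk.mem_support_append_iff] at hz
  rcases hz with hz | hz
  · refine (hP.mem_or_eq_of_isPath (hr.takeUntil hB) hx (fun h => hA ?_) z hz).resolve_right hzB
    exact r.support_takeUntil_subset_support hB h
  · refine (hP.mem_or_eq_of_isPath (hr.dropUntil hB).reverse hy (fun h => hA ?_) z
      (by simpa using hz)).resolve_right hzB
    exact r.support_dropUntil_subset_support hB (by simpa using h)

theorem not_connected_induce (hP : G.IsSeparatedBy P A B) (hA : A ∉ P) (hB : B ∉ P) {p q : V}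
    (hp : p ∈ P) (hq : q ∉ P) (hqA : q ≠ A) (hqB : q ≠ B) :
    ¬ (G.induce {A, B}ᶜ).Connected := by
  intro hconn
  have hp' : p ∈ ({A, B} : Set V)ᶜ := by
    rintro (rfl | rfl) <;> contradiction
  have hq' : q ∈ ({A, B} : Set V)ᶜ := by
    rintro (rfl | rfl) <;> contradiction
  obtain ⟨w⟩ := hconn ⟨p, hp'⟩ ⟨q, hq'⟩
  have hw : ∀ z ∈ (w.map (Embedding.induce _).toHom).support, z ∈ ({A, B} : Set V)ᶜ := by
    simp only [Walk.support_map, List.mem_map]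
    rintro _ ⟨z, -, rfl⟩
    exact z.2
  exact hq (hP.mem_of_walk _ hp (fun h => hw A h (by simp)) (fun h => hw B h (by simp)))

end IsSeparatedBy

lemma lineGraph_not_adj_of_forall_notMem {e f : G.edgeSet}
    (h : ∀ ⦃w⦄, w ∈ (e : Sym2 V) → w ∉ (f : Sym2 V)) : ¬ G.lineGraph.Adj e f :=
  fun hef =>
    let ⟨_, _, he, hf⟩ := lineGraph_adj_iff_exists.1 hef
    h he hf

lemma lineGraph_isSeparatedBy {U : Set V} {A B : G.edgeSet}
    (hU : ∀ ⦃u v⦄, G.Adj u v → u ∈ U → v ∉ U → s(u, v) = A ∨ s(u, v) = B) :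
    G.lineGraph.IsSeparatedBy {f | (f : Sym2 V) ∈ U.sym2} A B := by
  intro f g hfg hf
  obtain ⟨-, w, hwf, hwg⟩ := lineGraph_adj_iff_exists.1 hfg
  have hwU : w ∈ U := Set.mem_sym2_iff_subset.1 hf hwf
  have hg : s(w, Sym2.Mem.other hwg) = g := Sym2.other_spec hwg
  by_cases hv : Sym2.Mem.other hwg ∈ U
  · exact .inl (show (g : Sym2 V) ∈ U.sym2 from hg ▸ ⟨hwU, hv⟩)
  · have hadj : G.Adj w (Sym2.Mem.other hwg) := by
      rw [← mem_edgeSet, hg]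
      exact g.2
    rcases hU hadj hwU hv with h | h
    · exact .inr (.inl (Subtype.ext (hg ▸ h)))
    · exact .inr (.inr (Subtype.ext (hg ▸ h)))

lemma Walk.IsCycle.exists_eq_cons_concat {u : V} {c : G.Walk u u} (hc : c.IsCycle) :
    ∃ (x y : V) (hx : G.Adj u x) (hy : G.Adj y u) (r : G.Walk x y),
      c = .cons hx (r.concat hy) ∧ r.IsPath ∧ u ∉ r.support := by
  cases c with
  | nil => exact absurd hc Walk.not_isCycle_nil
  | cons hx q =>
    cases q with
    | nil => exact absurd rfl hx.ne
    | cons h q =>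
      obtain ⟨y, r, hy, hr⟩ := Walk.exists_cons_eq_concat h q
      rw [hr] at hc ⊢
      exact ⟨_, y, hx, hy, r, rfl,
        (Walk.concat_isPath_iff hy).1 ((Walk.cons_isCycle_iff _ _).1 hc).1⟩

theorem Walk.IsHamiltonianCycle.existsUnique_mem_edges {P : Set V} {A B : V}
    (hP : G.IsSeparatedBy P A B) (hAB : ¬ G.Adj A B) (hne : A ≠ B) (hA : A ∉ P) (hB : B ∉ P)
    {p q : V} (hp : p ∈ P) (hq : q ∉ P) (hqA : q ≠ A) (hqB : q ≠ B)
    {u : V} {c : G.Walk u u} (hc : c.IsHamiltonianCycle) :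
    ∃! f, f ∈ P ∧ s(A, f) ∈ c.edges := by
  have hc' := hc.rotate (hc.mem_support A)
  obtain ⟨x, y, hx, hy, r, hcr, hr, hAr⟩ := hc'.isCycle.exists_eq_cons_concat
  have hcover : ∀ z, z ≠ A → z ∈ r.support := by
    intro z hz
    simpa [hcr, hz, Walk.support_concat] using hc'.mem_support z
  have hedgesA : ∀ f, s(A, f) ∈ c.edges ↔ f = x ∨ f = y := by
    intro f
    rw [← (c.rotate_edges A (hc.mem_support A)).mem_iff, hcr]
    have : s(A, f) ∉ r.edges := fun h => hAr (r.fst_mem_support_of_mem_edges h)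
    simp [Walk.edges_concat, this, Sym2.eq_swap, eq_comm, hx.ne, hy.ne']
  have hxB : x ≠ B := fun h => hAB (h ▸ hx)
  have hyB : y ≠ B := fun h => hAB (h ▸ hy.symm)
  have hBr := hcover B hne.symm
  -- Each of the two arcs of `c` between `A` and `B` stays on one side of the cut.
  have hxy : x ∈ P ↔ y ∉ P := by
    constructor
    · intro hxP hyP
      exact hq (hP.mem_of_mem_support_of_isPath hr hAr hBr hxP hyP (hcover q hqA) hqB)
    · intro hyP
      by_contra hxP
      exact (hP.compl.mem_of_mem_support_of_isPath hr hAr hBr ⟨hxP, hx.ne', hxB⟩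
        ⟨hyP, hy.ne, hyB⟩ (hcover p (ne_of_mem_of_not_mem hp hA))
        (ne_of_mem_of_not_mem hp hB)).1 hp
  by_cases hxP : x ∈ P
  · refine ⟨x, ⟨hxP, (hedgesA x).2 (.inl rfl)⟩, fun f ⟨hfP, hf⟩ => ?_⟩
    exact ((hedgesA f).1 hf).resolve_right fun h => hxy.1 hxP (h ▸ hfP)
  · have hyP : y ∈ P := not_not.1 (mt hxy.2 hxP)
    refine ⟨y, ⟨hyP, (hedgesA y).2 (.inr rfl)⟩, fun f ⟨hfP, hf⟩ => ?_⟩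
    exact ((hedgesA f).1 hf).resolve_left fun h => hxP (h ▸ hfP)

end SimpleGraph

namespace Xkt

variable {k t : ℕ}

lemma adj_inl_inr {i : Fin t} {g : Σ i : Fin t, Fin (mult k i)} {a : Fin (k + 1)} :
    (Xkt k t).Adj (.inl i) (.inr (g, a)) ↔
      (g.1 = i ∧ a = 0) ∨ ((i : ℕ) = ((g.1 : ℕ) + 1) % t ∧ a = 1) := by
  erw [Xkt, fromRel_adj]
  simp only [or_false, and_iff_right_iff_imp]
  exact fun _ => Sum.inl_ne_inr

lemma adj_inr_inr {g g' : Σ i : Fin t, Fin (mult k i)} {a b : Fin (k + 1)} :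
    (Xkt k t).Adj (.inr (g, a)) (.inr (g', b)) ↔ g = g' ∧ a ≠ b ∧ s(a, b) ≠ s(0, 1) := by
  erw [Xkt, fromRel_adj]
  simp only [ne_eq, Sym2.eq, Sym2.rel_iff', Prod.mk.injEq, Prod.swap_prod_mk, not_or, not_and]
  grind

lemma mult_pos (hk : 3 ≤ k) (i : Fin t) : 0 < mult k i := by
  unfold mult
  split <;> omega

/-- The vertex set of the copy `X_g` of `K_{k+1} - e` inserted into the edge `g` of `Y_{k,t}`. -/
def gadget (g : Σ i : Fin t, Fin (mult k i)) : Set (XktVert k t) :=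
  Set.range fun a => .inr (g, a)

def gadgetEdges (g : Σ i : Fin t, Fin (mult k i)) : Set (Xkt k t).edgeSet :=
  {f | (f : Sym2 (XktVert k t)) ∈ (gadget g).sym2}

lemma adj_inr_of_ne_zero_one {g : Σ i : Fin t, Fin (mult k i)} {a b : Fin (k + 1)}
    (ha0 : a ≠ 0) (ha1 : a ≠ 1) (hab : a ≠ b) :
    (Xkt k t).Adj (.inr (g, a)) (.inr (g, b)) := by
  refine adj_inr_inr.2 ⟨rfl, hab, fun h => ?_⟩
  rcases Sym2.eq_iff.1 h with ⟨h, -⟩ | ⟨h, -⟩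
  exacts [ha0 h, ha1 h]

lemma adj_inr_last (hk : 2 ≤ k) (g : Σ i : Fin t, Fin (mult k i)) {b : Fin (k + 1)}
    (hb : Fin.last k ≠ b) : (Xkt k t).Adj (.inr (g, Fin.last k)) (.inr (g, b)) := by
  refine adj_inr_of_ne_zero_one (Fin.ne_of_val_ne ?_) (Fin.ne_of_val_ne ?_) hb
  · simp only [Fin.val_last, Fin.val_zero]
    omega
  · rw [Fin.val_last, Fin.val_one_of_pos (by omega)]
    omega

lemma reachable_inl_inr (hk : 2 ≤ k) (g : Σ i : Fin t, Fin (mult k i)) (a : Fin (k + 1)) :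
    (Xkt k t).Reachable (.inl g.1) (.inr (g, a)) := by
  have h0 : (Xkt k t).Adj (.inl g.1) (.inr (g, 0)) := adj_inl_inr.2 (.inl ⟨rfl, rfl⟩)
  have hc : (Xkt k t).Reachable (.inl g.1) (.inr (g, Fin.last k)) :=
    h0.reachable.trans (adj_inr_last hk g (Fin.ne_of_val_ne (by simp; omega))).reachable.symm
  by_cases ha : Fin.last k = a
  · exact ha ▸ hc
  · exact hc.trans (adj_inr_last hk g ha).reachable

lemma reachable_inl_inl (hk : 3 ≤ k) {i i' : Fin t} (h : (i' : ℕ) = ((i : ℕ) + 1) % t) :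
    (Xkt k t).Reachable (.inl i) (.inl i') :=
  (reachable_inl_inr (by omega) ⟨i, ⟨0, mult_pos hk i⟩⟩ 1).trans
    (adj_inl_inr.2 (.inr ⟨h, rfl⟩)).reachable.symm

theorem connected (hk : 3 ≤ k) (ht : 0 < t) : (Xkt k t).Connected := by
  have hinl : ∀ n (hn : n < t), (Xkt k t).Reachable (.inl ⟨0, ht⟩) (.inl ⟨n, hn⟩) := by
    intro n
    induction n with
    | zero => exact fun _ => .rfl
    | succ n ih =>
      exact fun hn => (ih (by omega)).trans (reachable_inl_inl hk (Nat.mod_eq_of_lt hn).symm)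
  have hall : ∀ v, (Xkt k t).Reachable (.inl ⟨0, ht⟩) v := by
    rintro (i | ⟨g, a⟩)
    · exact hinl i i.2
    · exact (hinl g.1 g.1.2).trans (reachable_inl_inr (by omega) g a)
  exact @Connected.mk _ _ (fun u v => (hall u).symm.trans (hall v)) ⟨.inl ⟨0, ht⟩⟩

lemma isSeparatedBy_gadgetEdges {g : Σ i : Fin t, Fin (mult k i)} {i₁ : Fin t}
    (hi₁ : (i₁ : ℕ) = ((g.1 : ℕ) + 1) % t) {E₁ E₂ : (Xkt k t).edgeSet}
    (hE₁ : (E₁ : Sym2 (XktVert k t)) = s(.inl g.1, .inr (g, 0)))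
    (hE₂ : (E₂ : Sym2 (XktVert k t)) = s(.inl i₁, .inr (g, 1))) :
    (Xkt k t).lineGraph.IsSeparatedBy (gadgetEdges g) E₁ E₂ := by
  refine lineGraph_isSeparatedBy ?_
  rintro _ (i | ⟨g', b⟩) huv ⟨a, rfl⟩ hv
  · rcases adj_inl_inr.1 huv.symm with ⟨rfl, rfl⟩ | ⟨hi, rfl⟩
    · exact .inl (by rw [hE₁]; exact Sym2.eq_swap)
    · obtain rfl : i = i₁ := Fin.ext (hi.trans hi₁.symm)
      exact .inr (by rw [hE₂]; exact Sym2.eq_swap)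
  · obtain rfl := (adj_inr_inr.1 huv).1
    exact absurd ⟨b, rfl⟩ hv

lemma notMem_gadgetEdges_of_inl_mem {g : Σ i : Fin t, Fin (mult k i)} {f : (Xkt k t).edgeSet}
    {i : Fin t} (h : .inl i ∈ (f : Sym2 (XktVert k t))) : f ∉ gadgetEdges g := fun hf => by
  obtain ⟨a, ha⟩ := Set.mem_sym2_iff_subset.1 hf h
  cases ha

lemma eq_of_mem_gadgetEdges {g g' : Σ i : Fin t, Fin (mult k i)} {f : (Xkt k t).edgeSet}
    (hf : f ∈ gadgetEdges g) (hf' : f ∈ gadgetEdges g') : g = g' := by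
  obtain ⟨a, ha⟩ := Set.mem_sym2_iff_subset.1 hf (Sym2.out_fst_mem _)
  obtain ⟨b, hb⟩ := Set.mem_sym2_iff_subset.1 hf' (Sym2.out_fst_mem _)
  exact congrArg Prod.fst (Sum.inr_injective (ha.trans hb.symm))

lemma exists_mem_gadgetEdges (hk : 2 ≤ k) (g : Σ i : Fin t, Fin (mult k i)) :
    ∃ f, f ∈ gadgetEdges g :=
  ⟨⟨s(.inr (g, Fin.last k), .inr (g, 0)),
      adj_inr_last hk g (Fin.ne_of_val_ne (by simp; omega))⟩,
    Set.mk_mem_sym2_iff.2 ⟨⟨_, rfl⟩, ⟨_, rfl⟩⟩⟩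

lemma mem_gadgetEdges_iff_of_adj {g : Σ i : Fin t, Fin (mult k i)} {E f : (Xkt k t).edgeSet}
    (hE : (E : Sym2 (XktVert k t)) = s(.inl g.1, .inr (g, 0)))
    (hf : (Xkt k t).lineGraph.Adj E f) :
    f ∈ gadgetEdges g ↔
      ∃ b : Fin (k + 1), b ≠ 0 ∧ (f : Sym2 (XktVert k t)) = s(.inr (g, 0), .inr (g, b)) := by
  constructor
  · intro hfg
    obtain ⟨-, w, hwE, hwf⟩ := lineGraph_adj_iff_exists.1 hf
    rw [hE] at hwE
    rcases Sym2.mem_iff.1 hwE with rfl | rfl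
    · exact absurd hfg (notMem_gadgetEdges_of_inl_mem hwf)
    obtain ⟨b, hb⟩ := Set.mem_sym2_iff_subset.1 hfg (Sym2.other_mem hwf)
    have hfb : (f : Sym2 (XktVert k t)) = s(.inr (g, 0), .inr (g, b)) := by
      rw [← Sym2.other_spec hwf, ← hb]
    refine ⟨b, fun hb0 => ?_, hfb⟩
    have hadj : s(.inr (g, 0), .inr (g, b)) ∈ (Xkt k t).edgeSet := hfb ▸ f.2
    subst hb0
    exact (Xkt k t).irrefl hadj
  · rintro ⟨b, -, hb⟩
    show (f : Sym2 (XktVert k t)) ∈ (gadget g).sym2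
    rw [hb]
    exact ⟨⟨0, rfl⟩, ⟨b, rfl⟩⟩

lemma notMem_of_mem_of_ne (hk : 0 < k) {g : Σ i : Fin t, Fin (mult k i)} {i₁ : Fin t}
    (hi₁ : i₁ ≠ g.1) {E₁ E₂ : (Xkt k t).edgeSet}
    (hE₁ : (E₁ : Sym2 (XktVert k t)) = s(.inl g.1, .inr (g, 0)))
    (hE₂ : (E₂ : Sym2 (XktVert k t)) = s(.inl i₁, .inr (g, 1))) :
    ∀ ⦃w⦄, w ∈ (E₁ : Sym2 (XktVert k t)) → w ∉ (E₂ : Sym2 (XktVert k t)) := by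
  intro w h₁ h₂
  rw [hE₁] at h₁
  rw [hE₂] at h₂
  rcases Sym2.mem_iff.1 h₁ with rfl | rfl <;> rcases Sym2.mem_iff.1 h₂ with h | h
  · exact hi₁ (Sum.inl_injective h).symm
  · cases h
  · cases h
  · have h01 := congrArg Fin.val (congrArg Prod.snd (Sum.inr_injective h))
    rw [Fin.val_zero, Fin.val_one_of_pos hk] at h01
    exact absurd h01 (by omega)

end Xkt

theorem vertex_cut_and_unique_gadget_edge_general (k t : ℕ) (hk : 3 ≤ k) (ht : 4 ≤ t)
    (i : Fin t) (j : Fin (mult k i))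
    (E₁ E₂ : (Xkt k t).edgeSet)
    (hE₁ : (E₁ : Sym2 (XktVert k t)) = s(Sum.inl i, Sum.inr (⟨i, j⟩, (0 : Fin (k + 1)))))
    (i₁ : Fin t) (hi₁ : (i₁ : ℕ) = ((i : ℕ) + 1) % t)
    (hE₂ : (E₂ : Sym2 (XktVert k t)) =
      s(Sum.inl i₁, Sum.inr (⟨i, j⟩, (1 : Fin (k + 1))))) :
    IsVertexCut (Xkt k t).lineGraph {E₁, E₂} ∧
      ∀ (x : Fin (k - 1) → (Xkt k t).edgeSet)
        (c : ∀ m, (Xkt k t).lineGraph.Walk (x m) (x m)),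
        IsHamDecompFam (Xkt k t).lineGraph x c →
        ∀ m : Fin (k - 1), ∃! f : (Xkt k t).edgeSet,
          (∃ b : Fin (k + 1), b ≠ 0 ∧ (f : Sym2 (XktVert k t)) =
            s(Sum.inr (⟨i, j⟩, (0 : Fin (k + 1))), Sum.inr (⟨i, j⟩, b))) ∧
          s(E₁, f) ∈ (c m).edges := by
  have hi₁i : i₁ ≠ i := Fin.ne_of_val_eq_add_one_mod (by omega) hi₁
  have hsep := Xkt.isSeparatedBy_gadgetEdges hi₁ hE₁ hE₂
  have hiE₁ : Sum.inl i ∈ (E₁ : Sym2 (XktVert k t)) := hE₁ ▸ Sym2.mem_mk_left _ _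
  have hi₁E₂ : Sum.inl i₁ ∈ (E₂ : Sym2 (XktVert k t)) := hE₂ ▸ Sym2.mem_mk_left _ _
  have hE₁g := Xkt.notMem_gadgetEdges_of_inl_mem (g := ⟨i, j⟩) hiE₁
  have hE₂g := Xkt.notMem_gadgetEdges_of_inl_mem (g := ⟨i, j⟩) hi₁E₂
  obtain ⟨p, hp⟩ := Xkt.exists_mem_gadgetEdges (by omega) ⟨i, j⟩
  obtain ⟨q, hq⟩ :=
    Xkt.exists_mem_gadgetEdges (by omega) ⟨i₁, ⟨0, Xkt.mult_pos hk i₁⟩⟩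
  have hqP : q ∉ Xkt.gadgetEdges ⟨i, j⟩ := fun h =>
    hi₁i (congrArg Sigma.fst (Xkt.eq_of_mem_gadgetEdges hq h))
  have hqE₁ := ne_of_mem_of_not_mem hq (Xkt.notMem_gadgetEdges_of_inl_mem hiE₁)
  have hqE₂ := ne_of_mem_of_not_mem hq (Xkt.notMem_gadgetEdges_of_inl_mem hi₁E₂)
  have hE₁E₂ := Xkt.notMem_of_mem_of_ne (by omega) hi₁i hE₁ hE₂
  have hne : E₁ ≠ E₂ := fun h => hE₁E₂ hiE₁ (h ▸ hiE₁)
  refine ⟨⟨(Xkt.connected hk (by omega)).lineGraph E₁,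
    hsep.not_connected_induce hE₁g hE₂g hp hqP hqE₁ hqE₂⟩, fun x c hc m => ?_⟩
  exact (existsUnique_congr fun f => and_congr_left fun hf =>
    Xkt.mem_gadgetEdges_iff_of_adj hE₁ ((c m).adj_of_mem_edges hf)).1
    ((hc.1 m).existsUnique_mem_edges hsep (lineGraph_not_adj_of_forall_notMem hE₁E₂) hne
      hE₁g hE₂g hp hqP hqE₁ hqE₂)

/-- In `X_{k,t}` (`k ≥ 3`, even `t ≥ 4`), for each (`0`-indexed) even `i`
and each `j`, the pair `{eᵢʲ, eᵢ₊₁ʲ}` of connecting edges of the inserted copy `Xᵢʲ` is a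
vertex cut of `L(X_{k,t})`; consequently, in any Hamilton decomposition of `L(X_{k,t})`, each
Hamilton cycle contains exactly one of the `k-1` edges of `L(X_{k,t})` joining `eᵢʲ` to the
`k-1` edges of `Xᵢʲ` adjacent to `eᵢʲ`. -/
theorem vertex_cut_and_unique_gadget_edge (k t : ℕ) (hk : 3 ≤ k) (ht : 4 ≤ t)
    (hte : Even t) (i : Fin t) (hi : (i : ℕ) % 2 = 0) (j : Fin (mult k i))
    (E₁ E₂ : (Xkt k t).edgeSet)
    (hE₁ : (E₁ : Sym2 (XktVert k t)) = s(Sum.inl i, Sum.inr (⟨i, j⟩, (0 : Fin (k + 1)))))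
    (i₁ : Fin t) (hi₁ : (i₁ : ℕ) = ((i : ℕ) + 1) % t)
    (hE₂ : (E₂ : Sym2 (XktVert k t)) =
      s(Sum.inl i₁, Sum.inr (⟨i, j⟩, (1 : Fin (k + 1))))) :
    IsVertexCut (Xkt k t).lineGraph {E₁, E₂} ∧
      ∀ (x : Fin (k - 1) → (Xkt k t).edgeSet)
        (c : ∀ m, (Xkt k t).lineGraph.Walk (x m) (x m)),
        IsHamDecompFam (Xkt k t).lineGraph x c →
        ∀ m : Fin (k - 1), ∃! f : (Xkt k t).edgeSet,
          (∃ b : Fin (k + 1), b ≠ 0 ∧ (f : Sym2 (XktVert k t)) =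
            s(Sum.inr (⟨i, j⟩, (0 : Fin (k + 1))), Sum.inr (⟨i, j⟩, b))) ∧
          s(E₁, f) ∈ (c m).edges :=
  vertex_cut_and_unique_gadget_edge_general k t hk ht i j E₁ E₂ hE₁ i₁ hi₁ hE₂
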